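/- Let A ∈ 𝒳 be a representative of an asymmetric partition and let D_A be the Dirichlet fundamental domain centered at A. Then every point B in the interior of D_A relative to 𝒳 represents an asymmetric partition; that is, B ≠ σ·B for every σ ∈ Π with σ ≠ id. -/

import Mathlib

open scoped BigOperators
open MeasureTheory

noncomputable section

/-- Matrices as points of the Euclidean space `ℝ^{ℓ×m}` with the Frobenius norm. -/
abbrev Mat (l m : ℕ) := EuclideanSpace ℝ (Fin l × Fin m)

/-- `A` is a representation matrix: entries in `[0,1]` and each column sums to `1`. -/
def IsRep {l m : ℕ} (A : Mat l m) : Prop :=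
  (∀ p, 0 ≤ A p ∧ A p ≤ 1) ∧ ∀ j : Fin m, ∑ k : Fin l, A (k, j) = 1

/-- The representation space `𝒳`. -/
abbrev RepSpace (l m : ℕ) := {A : Mat l m // IsRep A}

/-- Action of a permutation on a matrix by permuting rows. -/
def permAct {l m : ℕ} (σ : Equiv.Perm (Fin l)) (A : Mat l m) : Mat l m :=
  WithLp.toLp 2 (fun p => A (σ⁻¹ p.1, p.2))

lemma isRep_permAct {l m : ℕ} (σ : Equiv.Perm (Fin l)) {A : Mat l m} (hA : IsRep A) :
    IsRep (permAct σ A) := by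
  refine ⟨fun p => hA.1 (σ⁻¹ p.1, p.2), fun j => ?_⟩
  have h := Equiv.sum_comp σ⁻¹ (fun k => A (k, j))
  simpa [permAct] using h.trans (hA.2 j)

instance {l m : ℕ} : SMul (Equiv.Perm (Fin l)) (RepSpace l m) :=
  ⟨fun σ A => ⟨permAct σ A.1, isRep_permAct σ A.2⟩⟩

lemma smul_rep_def {l m : ℕ} (σ : Equiv.Perm (Fin l)) (A : RepSpace l m) :
    (σ • A).1 = permAct σ A.1 := rfl

instance {l m : ℕ} : MulAction (Equiv.Perm (Fin l)) (RepSpace l m) where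
  one_smul A := Subtype.ext rfl
  mul_smul σ τ A := Subtype.ext rfl

/-- Two representation matrices are equivalent iff they lie in the same `Π`-orbit. -/
instance pSetoid (l m : ℕ) : Setoid (RepSpace l m) :=
  MulAction.orbitRel (Equiv.Perm (Fin l)) (RepSpace l m)

/-- The partition space `𝒫 = 𝒳/Π`. -/
abbrev PSpace (l m : ℕ) := Quotient (pSetoid l m)

/-- The intrinsic metric `δ` on `𝒫`: the minimal Euclidean distance between representatives. -/
def pdist {l m : ℕ} (X Y : PSpace l m) : ℝ :=
  sInf {d | ∃ A B : RepSpace l m, ⟦A⟧ = X ∧ ⟦B⟧ = Y ∧ d = dist A B}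

/-- The degree of asymmetry `α` of the partition represented by `A`:
`min {‖A - σ·A‖ : σ ≠ id}`. -/
def alpha {l m : ℕ} (A : RepSpace l m) : ℝ :=
  sInf {d | ∃ σ : Equiv.Perm (Fin l), σ ≠ 1 ∧ d = dist A (σ • A)}

/-- The closed ball in the partition space. -/
def pBall {l m : ℕ} (Z : PSpace l m) (r : ℝ) : Set (PSpace l m) :=
  {X | pdist X Z ≤ r}

/-- The metric topology on `𝒫` generated by the open balls of `δ`. -/
instance {l m : ℕ} : TopologicalSpace (PSpace l m) :=
  TopologicalSpace.generateFrom {s | ∃ (Z : PSpace l m) (r : ℝ), s = {X | pdist X Z < r}}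

instance {l m : ℕ} : MeasurableSpace (PSpace l m) := borel _

/-- `B(Z, r)` is a homogeneous ball: there is a bijective isometry onto the closed ball of
radius `r` in `𝒳` centered at a representative of `Z`. -/
def IsHomBall {l m : ℕ} (Z : PSpace l m) (r : ℝ) : Prop :=
  ∃ A : RepSpace l m, ⟦A⟧ = Z ∧
    ∃ φ : pBall Z r → {B : RepSpace l m | dist B A ≤ r},
      Function.Bijective φ ∧
        ∀ X Y : pBall Z r,
          dist (φ X : RepSpace l m) (φ Y : RepSpace l m) =
            pdist (X : PSpace l m) (Y : PSpace l m)

/-- The `k`-th row of a representation matrix, as a point of Euclidean space `ℝ^m`. -/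
def rowOf {l m : ℕ} (A : RepSpace l m) (k : Fin l) : EuclideanSpace ℝ (Fin m) :=
  WithLp.toLp 2 (fun j => A.1 (k, j))

/-- The support of a measure: the smallest closed set of full measure. -/
def msupport {l m : ℕ} (Q : Measure (PSpace l m)) : Set (PSpace l m) :=
  ⋂₀ {S | IsClosed S ∧ Q S = 1}

/-- The Dirichlet fundamental domain centered at `A`. -/
def DirDom {l m : ℕ} (A : RepSpace l m) : Set (RepSpace l m) :=
  {B | ∀ σ : Equiv.Perm (Fin l), dist B A ≤ dist B (σ • A)}

/-! If `σ • B = B`, then `B` is equidistant from `A` and `σ • A`, since row permutations are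
isometries. Moving `B` a little towards `σ • A` stays inside the convex set `𝒳` and, `B` being
interior, inside `D_A`. In a Euclidean space, however, a point equidistant from `A` and `σ • A`
moved towards `σ • A` becomes strictly closer to `σ • A` than to `A`, unless `σ • A = A`. -/

section InnerProductSpace

variable {E : Type*} [NormedAddCommGroup E] [InnerProductSpace ℝ E]

open Filter Topology

theorem eq_of_dist_combo_le {a b c : E} {t : ℝ} (ht : 0 < t) (hbc : dist b a = dist b c)
    (h : dist ((1 - t) • b + t • c) a ≤ dist ((1 - t) • b + t • c) c) : a = c := by
  set v := b - a
  set w := b - c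
  have hvw : ‖v‖ = ‖w‖ := by simpa only [dist_eq_norm] using hbc
  have hsq : ‖v - t • w‖ ^ 2 ≤ ‖(1 - t) • w‖ ^ 2 := by
    have hPa : (1 - t) • b + t • c - a = v - t • w := by module
    have hPc : (1 - t) • b + t • c - c = (1 - t) • w := by module
    rw [dist_eq_norm, dist_eq_norm, hPa, hPc] at h
    exact pow_le_pow_left₀ (norm_nonneg _) h 2
  have hinner : ‖w‖ ^ 2 ≤ inner ℝ v w := by
    rw [norm_sub_sq_real, norm_smul, norm_smul, real_inner_smul_right, hvw, mul_pow, mul_pow,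
      Real.norm_eq_abs, Real.norm_eq_abs, sq_abs, sq_abs] at hsq
    nlinarith
  have hzero : ‖v - w‖ ^ 2 = 0 := by
    have := norm_sub_sq_real v w
    rw [hvw] at this
    nlinarith [sq_nonneg ‖v - w‖]
  simpa [v, w] using (sub_eq_zero.mp (norm_eq_zero.mp (pow_eq_zero_iff two_ne_zero |>.mp hzero)))

theorem eq_of_mem_interior_dist_le {S : Set E} (hS : Convex ℝ S) {a c : E} (hc : c ∈ S)
    {b : S} (hb : b ∈ interior {p : S | dist (p : E) a ≤ dist (p : E) c})
    (hbc : dist (b : E) a = dist (b : E) c) : a = c := by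
  obtain ⟨u, hu, hsub⟩ := mem_nhds_subtype S b _ |>.mp (mem_interior_iff_mem_nhds.mp hb)
  have hpath : Tendsto (fun t : ℝ => (1 - t) • (b : E) + t • c) (𝓝 0) (𝓝 b) := by
    have hcont : Continuous fun t : ℝ => (1 - t) • (b : E) + t • c := by fun_prop
    simpa using hcont.tendsto 0
  have hnear : ∀ᶠ t in 𝓝[>] (0 : ℝ), (1 - t) • (b : E) + t • c ∈ u ∧ t < 1 :=
    nhdsWithin_le_nhds ((hpath.eventually_mem hu).and (gt_mem_nhds one_pos))
  obtain ⟨t, ⟨hP, ht1⟩, ht0⟩ := (hnear.and self_mem_nhdsWithin).exists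
  have hPS : (1 - t) • (b : E) + t • c ∈ S :=
    hS b.2 hc (by linarith) ht0.le (by ring)
  exact eq_of_dist_combo_le ht0 hbc (hsub (a := ⟨_, hPS⟩) hP)

end InnerProductSpace

theorem convex_setOf_isRep (l m : ℕ) : Convex ℝ {A : Mat l m | IsRep A} := by
  intro X hX Y hY s t hs ht hst
  refine ⟨fun p => ?_, fun j => ?_⟩
  · have hx := hX.1 p
    have hy := hY.1 p
    change 0 ≤ s * X p + t * Y p ∧ s * X p + t * Y p ≤ 1
    constructor <;> nlinarith
  · change ∑ k, (s * X (k, j) + t * Y (k, j)) = 1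
    rw [Finset.sum_add_distrib, ← Finset.mul_sum, ← Finset.mul_sum, hX.2 j, hY.2 j]
    linarith

instance {l m : ℕ} : IsIsometricSMul (Equiv.Perm (Fin l)) (RepSpace l m) where
  isometry_smul σ := Isometry.of_dist_eq fun X Y => by
    rw [Subtype.dist_eq, Subtype.dist_eq, smul_rep_def, smul_rep_def,
      EuclideanSpace.dist_eq, EuclideanSpace.dist_eq]
    congr 1
    exact Equiv.sum_comp (Equiv.prodCongr σ⁻¹ (Equiv.refl (Fin m)))
      fun q => dist (X.1 q) (Y.1 q) ^ 2

theorem stmt16_general {l m : ℕ} (A : RepSpace l m)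
    (hA : ∀ σ : Equiv.Perm (Fin l), σ ≠ 1 → σ • A ≠ A)
    (B : RepSpace l m) (hB : B ∈ interior (DirDom A)) :
    ∀ σ : Equiv.Perm (Fin l), σ ≠ 1 → σ • B ≠ B := by
  intro σ hσ hfix
  have hequi : dist B.1 A.1 = dist B.1 (σ • A).1 := by
    rw [← Subtype.dist_eq, ← Subtype.dist_eq, ← dist_smul σ B A, hfix]
  have hB' : B ∈ interior {P : RepSpace l m | dist P.1 A.1 ≤ dist P.1 (σ • A).1} :=
    interior_mono (fun P (hP : P ∈ DirDom A) => hP σ) hB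
  exact hA σ hσ (Subtype.ext
    (eq_of_mem_interior_dist_le (convex_setOf_isRep l m) (σ • A).2 hB' hequi).symm)

theorem stmt16 {l m : ℕ} (hl : 1 ≤ l) (hm : 1 ≤ m) (A : RepSpace l m)
    (hA : ∀ σ : Equiv.Perm (Fin l), σ ≠ 1 → σ • A ≠ A)
    (B : RepSpace l m) (hB : B ∈ interior (DirDom A)) :
    ∀ σ : Equiv.Perm (Fin l), σ ≠ 1 → σ • B ≠ B :=
  stmt16_general A hA B hB
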